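/- arXiv:0904.1225 — 3 statements merged into one kernel-verified Lean document; each statement's English description precedes it below -/
import Mathlib

section
/- Let μ be a probability measure on ℝ that is mutually singular with Lebesgue measure. Then the pushforward measure ν = p_*μ of μ under the canonical quotient map p : ℝ → ℝ/ℤ is mutually singular with the Haar measure on the circle ℝ/ℤ. -/
/-!
A measure singular to Lebesgue measure is carried by a Lebesgue-null set `N`. The saturation of
`N` under integer translations is still null and measurable, being a countable union of
translates, and its image on the circle is a Haar-null set carrying the pushforward: Haar measure
on the circle is the image of Lebesgue measure on `(0, 1]`.
-/

open MeasureTheory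

theorem Real.fact_zero_lt_one : Fact ((0 : ℝ) < 1) :=
  ⟨zero_lt_one⟩

attribute [local instance] Real.fact_zero_lt_one

namespace QuotientAddGroup

variable {G : Type*} [AddGroup G] [MeasurableSpace G] [MeasurableAdd G] (Γ : AddSubgroup G)
  [Countable Γ]

theorem measurableSet_image_mk {s : Set G} (hs : MeasurableSet s) :
    MeasurableSet ((mk : G → G ⧸ Γ) '' s) := by
  change MeasurableSet (mk ⁻¹' (mk '' s))
  rw [preimage_image_mk]
  exact .iUnion fun γ => hs.preimage (measurable_add_const _)

theorem measure_preimage_image_mk_eq_zero {ν : Measure G} [ν.IsAddRightInvariant] {s : Set G}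
    (hs : ν s = 0) : ν ((mk : G → G ⧸ Γ) ⁻¹' (mk '' s)) = 0 := by
  rw [preimage_image_mk]
  exact measure_iUnion_null fun γ => by rwa [measure_preimage_add_right]

end QuotientAddGroup

theorem MeasureTheory.Measure.MutuallySingular.map_quotientAddGroup_mk {G : Type*} [AddGroup G]
    [MeasurableSpace G] [MeasurableAdd G] (Γ : AddSubgroup G) [Countable Γ] {μ ν : Measure G}
    [ν.IsAddRightInvariant] (h : μ ⟂ₘ ν) :
    μ.map (QuotientAddGroup.mk : G → G ⧸ Γ) ⟂ₘ ν.map QuotientAddGroup.mk := by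
  obtain ⟨s, hs, hμs, hνs⟩ := h
  have hmk : Measurable (QuotientAddGroup.mk : G → G ⧸ Γ) := fun _ ht => ht
  have himage := QuotientAddGroup.measurableSet_image_mk Γ hs.compl
  refine ⟨(QuotientAddGroup.mk '' sᶜ)ᶜ, himage.compl, ?_, ?_⟩
  · rw [Measure.map_apply hmk himage.compl, Set.preimage_compl]
    exact measure_mono_null (Set.compl_subset_comm.mp (Set.subset_preimage_image _ _)) hμs
  · rw [compl_compl, Measure.map_apply hmk himage]
    exact QuotientAddGroup.measure_preimage_image_mk_eq_zero Γ hνs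

theorem AddCircle.volume_absolutelyContinuous_map_mk (T : ℝ) [Fact (0 < T)] :
    (volume : Measure (AddCircle T)) ≪ (volume : Measure ℝ).map ((↑) : ℝ → AddCircle T) := by
  rw [← (AddCircle.measurePreserving_mk T 0).map_eq]
  exact Measure.restrict_le_self.absolutelyContinuous.map AddCircle.measurable_mk'

theorem pushforward_mutuallySingular_haar_general
    (μ : Measure ℝ)
    (h : μ.MutuallySingular (volume : Measure ℝ)) :
    (μ.map ((↑) : ℝ → AddCircle (1 : ℝ))).MutuallySingular (volume : Measure (AddCircle (1 : ℝ))) :=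
  (h.map_quotientAddGroup_mk (AddSubgroup.zmultiples 1)).mono_ac .rfl
    (AddCircle.volume_absolutelyContinuous_map_mk 1)

/-- If a probability measure `μ` on `ℝ` is mutually singular with Lebesgue measure, then its
pushforward under the quotient map `ℝ → ℝ/ℤ` is mutually singular with Haar measure on the
circle. -/
theorem pushforward_mutuallySingular_haar
    (μ : Measure ℝ) [IsProbabilityMeasure μ]
    (h : μ.MutuallySingular (volume : Measure ℝ)) :
    (μ.map ((↑) : ℝ → AddCircle (1 : ℝ))).MutuallySingular (volume : Measure (AddCircle (1 : ℝ))) :=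
  pushforward_mutuallySingular_haar_general μ h
end

section
/- Let ν be a probability measure on the circle ℝ/ℤ whose Fourier coefficients vanish at infinity, i.e. ∫ e^{2πint} dν(t) → 0 as |n| → ∞ (along the cofinite filter on ℤ). Then the unitary representation π^ν of ℤ on L²(ℝ/ℤ, ν) given by multiplication by the characters, (π^ν_n f)(t) = e^{2πint} f(t), is mixing: for all f, g ∈ L²(ℝ/ℤ, ν), the matrix coefficients ⟨π^ν_n f, g⟩ = ∫ e^{2πint} f(t) \overline{g(t)} dν(t) tend to 0 as |n| → ∞. -/
open MeasureTheory Filter Topology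

attribute [local instance] Real.fact_zero_lt_one

/-! The twisted integrals `ψ ↦ ∫ e_n ψ dν` are functionals of norm at most `1` on `L¹(ν)`,
so the densities `ψ` for which they tend to `0` form a closed subspace of `L¹(ν)`. It contains
every character `e_m`, since `∫ e_n e_m dν` is the `(n + m)`-th Fourier coefficient of `ν`;
hence it contains the trigonometric polynomials, which are uniformly dense in `C(ℝ/ℤ)`, and
therefore all of `L¹(ν)`, in which continuous functions are dense. Apply this to `ψ = f ḡ`. -/

theorem tendsto_zero_of_forall_norm_sub_le {ι E : Type*} [SeminormedAddCommGroup E]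
    {l : Filter ι} {u : ι → E}
    (h : ∀ ε > 0, ∃ v : ι → E, Tendsto v l (𝓝 0) ∧ ∀ i, ‖u i - v i‖ ≤ ε) :
    Tendsto u l (𝓝 0) := by
  refine NormedAddGroup.tendsto_nhds_zero.2 fun ε hε => ?_
  obtain ⟨v, hv, huv⟩ := h (ε / 2) (half_pos hε)
  filter_upwards [NormedAddGroup.tendsto_nhds_zero.1 hv (ε / 2) (half_pos hε)] with i hi
  calc ‖u i‖ ≤ ‖u i - v i‖ + ‖v i‖ := norm_le_norm_sub_add _ _
    _ < ε := by linarith [huv i]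

namespace AddCircle

variable {T : ℝ} {ν : Measure (AddCircle T)}

theorem integrable_fourier_mul {ψ : AddCircle T → ℂ} (hψ : Integrable ψ ν) (n : ℤ) :
    Integrable (fun t => fourier n t * ψ t) ν :=
  hψ.bdd_mul (c := 1) (map_continuous (fourier n)).aestronglyMeasurable
    (.of_forall fun t => by simp [Circle.norm_coe])

theorem norm_integral_fourier_mul_le (ψ : AddCircle T → ℂ) (n : ℤ) :
    ‖∫ t, fourier n t * ψ t ∂ν‖ ≤ ∫ t, ‖ψ t‖ ∂ν :=
  (norm_integral_le_integral_norm _).trans_eq (by simp [Circle.norm_coe])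

theorem tendsto_integral_fourier_mul_fourier
    (h : Tendsto (fun n : ℤ => ∫ t, fourier n t ∂ν) cofinite (𝓝 0)) (m : ℤ) :
    Tendsto (fun n : ℤ => ∫ t, fourier n t * fourier m t ∂ν) cofinite (𝓝 0) := by
  simpa only [Function.comp_def, fourier_add] using
    h.comp (add_left_injective m).tendsto_cofinite

variable (ν) in
def fourierVanishingSubmodule : Submodule ℂ (Lp ℂ 1 ν) where
  carrier := {ψ | Tendsto (fun n : ℤ => ∫ t, fourier n t * ψ t ∂ν) cofinite (𝓝 0)}
  zero_mem' := by
    refine tendsto_const_nhds.congr fun n => ?_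
    rw [← integral_zero (AddCircle T) ℂ]
    exact integral_congr_ae <|
      (Lp.coeFn_zero ℂ 1 ν).mono fun t ht => by simp only [ht, Pi.zero_apply, mul_zero]
  add_mem' {ψ φ} hψ hφ := by
    refine (add_zero (0 : ℂ) ▸ hψ.add hφ).congr fun n => ?_
    rw [← integral_add (integrable_fourier_mul (L1.integrable_coeFn ψ) n)
      (integrable_fourier_mul (L1.integrable_coeFn φ) n)]
    exact integral_congr_ae <|
      (Lp.coeFn_add ψ φ).mono fun t ht => by simp only [ht, Pi.add_apply, mul_add]
  smul_mem' c ψ hψ := by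
    refine (mul_zero c ▸ hψ.const_mul c).congr fun n => ?_
    rw [← integral_const_mul]
    exact integral_congr_ae ((Lp.coeFn_smul c ψ).mono fun t ht => by
      simp only [ht, Pi.smul_apply, smul_eq_mul, mul_left_comm])

theorem isClosed_fourierVanishingSubmodule :
    IsClosed (fourierVanishingSubmodule ν : Set (Lp ℂ 1 ν)) := by
  refine isClosed_of_closure_subset fun ψ hψ => ?_
  refine tendsto_zero_of_forall_norm_sub_le fun ε hε => ?_
  obtain ⟨φ, hφ, hψφ⟩ := Metric.mem_closure_iff.1 hψ ε hε
  refine ⟨_, hφ, fun n => ?_⟩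
  rw [← integral_sub (integrable_fourier_mul (L1.integrable_coeFn ψ) n)
      (integrable_fourier_mul (L1.integrable_coeFn φ) n)]
  calc _ = ‖∫ t, fourier n t * (ψ - φ) t ∂ν‖ := by
        congr 1
        exact integral_congr_ae <|
          (Lp.coeFn_sub ψ φ).mono fun t ht => by simp only [ht, Pi.sub_apply, mul_sub]
    _ ≤ ‖ψ - φ‖ :=
        (norm_integral_fourier_mul_le _ n).trans_eq (L1.norm_eq_integral_norm _).symm
    _ ≤ ε := by rw [← dist_eq_norm]; exact hψφ.le

theorem toLp_fourier_mem_fourierVanishingSubmodule [Fact (0 < T)] [IsFiniteMeasure ν]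
    (h : Tendsto (fun n : ℤ => ∫ t, fourier n t ∂ν) cofinite (𝓝 0)) (m : ℤ) :
    ContinuousMap.toLp 1 ν ℂ (fourier m) ∈ fourierVanishingSubmodule ν :=
  (tendsto_integral_fourier_mul_fourier h m).congr fun n => integral_congr_ae <|
    (ContinuousMap.coeFn_toLp (p := 1) (𝕜 := ℂ) ν (fourier m)).mono fun t ht => by
      simp only [ht]

theorem fourierVanishingSubmodule_eq_top [Fact (0 < T)] [IsFiniteMeasure ν]
    (h : Tendsto (fun n : ℤ => ∫ t, fourier n t ∂ν) cofinite (𝓝 0)) :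
    fourierVanishingSubmodule ν = ⊤ := by
  set toL1 : C(AddCircle T, ℂ) →L[ℂ] Lp ℂ 1 ν := ContinuousMap.toLp 1 ν ℂ
  have range_le : Set.range toL1 ⊆ fourierVanishingSubmodule ν := by
    have hspan : Submodule.span ℂ (Set.range fourier) ≤
        (fourierVanishingSubmodule ν).comap toL1.toLinearMap :=
      Submodule.span_le.2 <| Set.range_subset_iff.2 <|
        toLp_fourier_mem_fourierVanishingSubmodule h
    have htop : ⊤ ≤ (fourierVanishingSubmodule ν).comap toL1.toLinearMap :=
      span_fourier_closure_eq_top (T := T) ▸ Submodule.topologicalClosure_minimal _ hspan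
        (isClosed_fourierVanishingSubmodule.preimage toL1.continuous)
    rintro _ ⟨P, rfl⟩
    exact htop Submodule.mem_top
  refine Submodule.eq_top_iff'.2 fun ψ => ?_
  have hdense := ContinuousMap.toLp_denseRange ℂ ν ℂ (p := 1) ENNReal.one_ne_top
  exact isClosed_fourierVanishingSubmodule.closure_subset_iff.2 range_le (hdense ψ)

theorem tendsto_integral_fourier_mul [Fact (0 < T)] [IsFiniteMeasure ν]
    (h : Tendsto (fun n : ℤ => ∫ t, fourier n t ∂ν) cofinite (𝓝 0))
    {ψ : AddCircle T → ℂ} (hψ : Integrable ψ ν) :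
    Tendsto (fun n : ℤ => ∫ t, fourier n t * ψ t ∂ν) cofinite (𝓝 0) := by
  have hmem : hψ.toL1 ψ ∈ fourierVanishingSubmodule ν :=
    fourierVanishingSubmodule_eq_top h ▸ Submodule.mem_top
  exact hmem.congr fun n => integral_congr_ae <|
    (Integrable.coeFn_toL1 hψ).mono fun t ht => by simp only [ht]

end AddCircle

/-- If the Fourier coefficients of a probability measure `ν` on the circle `ℝ/ℤ` vanish at
infinity, then the unitary representation of `ℤ` on `L²(ℝ/ℤ, ν)` given by multiplication by the
characters is mixing: all matrix coefficients `⟨π^ν_n f, g⟩ = ∫ e^{2πint} f(t) conj (g t) dν(t)`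
tend to `0` as `|n| → ∞`. -/
theorem multiplication_repr_mixing_of_fourierCoeff_tendsto_zero
    (ν : Measure (AddCircle (1 : ℝ))) [IsProbabilityMeasure ν]
    (h : Filter.Tendsto (fun n : ℤ => ∫ t, fourier n t ∂ν) Filter.cofinite (nhds 0))
    (f g : Lp ℂ 2 ν) :
    Filter.Tendsto (fun n : ℤ => ∫ t, fourier n t * f t * (starRingEnd ℂ) (g t) ∂ν)
      Filter.cofinite (nhds 0) := by
  have hfg : Integrable (fun t => f t * starRingEnd ℂ (g t)) ν :=
    (L2.integrable_inner g f).congr (.of_forall fun t => RCLike.inner_apply _ _)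
  simpa only [mul_assoc] using AddCircle.tendsto_integral_fourier_mul h hfg
end

section
/- (Popa's transversality inequality, Hilbert-space form.) Let H be a complex Hilbert space, K ⊆ H a closed subspace, and P : H → K the orthogonal projection onto K. Let (u_t)_{t∈ℝ} be a family of unitary operators on H satisfying u_{s+t} = u_s u_t for all s, t ∈ ℝ, and let v be a unitary operator on H such that v u_t = u_{-t} v for all t ∈ ℝ and v ξ = ξ for every ξ ∈ K. Then for every ξ ∈ K and every t ∈ ℝ, ‖ξ − u_{2t} ξ‖ ≤ 2 ‖u_t ξ − P(u_t ξ)‖. -/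
/-!
Since `v` fixes `ξ` and reverses the flow, `v (u_t ξ) = u_{-t} ξ`,
and applying `u_{-t}` shows `‖ξ − u_{2t} ξ‖ = ‖v (u_t ξ) − u_t ξ‖`.
An isometry `v` moves any vector `η` by at most twice its distance to a fixed point of `v`;
`P (u_t ξ) ∈ K` is such a fixed point.
-/

theorem LinearIsometry.norm_map_sub_self_le_of_map_eq_self {𝕜 E : Type*} [RCLike 𝕜]
    [SeminormedAddCommGroup E] [NormedSpace 𝕜 E] (v : E →ₗᵢ[𝕜] E) {p : E} (hp : v p = p)
    (x : E) : ‖v x - x‖ ≤ 2 * ‖x - p‖ :=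
  calc ‖v x - x‖ = ‖v (x - p) - (x - p)‖ := by rw [map_sub, hp, sub_sub_sub_cancel_right]
    _ ≤ ‖v (x - p)‖ + ‖x - p‖ := norm_sub_le _ _
    _ = 2 * ‖x - p‖ := by rw [v.norm_map, two_mul]

theorem norm_sub_map_two_mul_eq {𝕜 E : Type*} [RCLike 𝕜] [SeminormedAddCommGroup E]
    [NormedSpace 𝕜 E] (u : ℝ → E ≃ₗᵢ[𝕜] E) (hu : ∀ s t : ℝ, ∀ x : E, u (s + t) x = u s (u t x))
    (ξ : E) (t : ℝ) : ‖ξ - u (2 * t) ξ‖ = ‖u (-t) ξ - u t ξ‖ := by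
  have hshift : u (-t) (u (2 * t) ξ) = u t ξ := by rw [← hu]; ring_nf
  rw [← (u (-t)).norm_map, map_sub, hshift]

theorem popa_transversality_general
    {H : Type*} [NormedAddCommGroup H] [InnerProductSpace ℂ H]
    (K : Submodule ℂ H) [CompleteSpace K]
    (u : ℝ → H ≃ₗᵢ[ℂ] H) (v : H ≃ₗᵢ[ℂ] H)
    (hu : ∀ s t : ℝ, ∀ x : H, u (s + t) x = u s (u t x))
    (hvu : ∀ t : ℝ, ∀ x : H, v (u t x) = u (-t) (v x))
    (hvK : ∀ ξ ∈ K, v ξ = ξ) :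
    ∀ ξ ∈ K, ∀ t : ℝ,
      ‖ξ - u (2 * t) ξ‖ ≤ 2 * ‖u t ξ - (K.orthogonalProjectionOnto (u t ξ) : H)‖ := by
  intro ξ hξ t
  have hflip : u (-t) ξ = v (u t ξ) := by rw [hvu, hvK ξ hξ]
  rw [norm_sub_map_two_mul_eq u hu, hflip]
  exact v.toLinearIsometry.norm_map_sub_self_le_of_map_eq_self (hvK _ (Subtype.prop _)) _

/-- Popa's transversality inequality, Hilbert-space form: if `(u_t)` is a one-parameter family of
unitaries on a complex Hilbert space `H` with `u_{s+t} = u_s u_t`, and `v` is a unitary with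
`v u_t = u_{-t} v` fixing a closed subspace `K` pointwise, then for every `ξ ∈ K` and `t ∈ ℝ`,
`‖ξ − u_{2t} ξ‖ ≤ 2 ‖u_t ξ − P_K(u_t ξ)‖`, where `P_K` is the orthogonal projection onto `K`. -/
theorem popa_transversality
    {H : Type*} [NormedAddCommGroup H] [InnerProductSpace ℂ H] [CompleteSpace H]
    (K : Submodule ℂ H) (hK : IsClosed (K : Set H)) [CompleteSpace K]
    (u : ℝ → H ≃ₗᵢ[ℂ] H) (v : H ≃ₗᵢ[ℂ] H)
    (hu : ∀ s t : ℝ, ∀ x : H, u (s + t) x = u s (u t x))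
    (hvu : ∀ t : ℝ, ∀ x : H, v (u t x) = u (-t) (v x))
    (hvK : ∀ ξ ∈ K, v ξ = ξ) :
    ∀ ξ ∈ K, ∀ t : ℝ,
      ‖ξ - u (2 * t) ξ‖ ≤ 2 * ‖u t ξ - (K.orthogonalProjectionOnto (u t ξ) : H)‖ :=
  popa_transversality_general K u v hu hvu hvK
end
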